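/- Let K ≥ 2, let n_1, …, n_K ≥ 2, set n = n_1 + ⋯ + n_K, and for each k let L_k be an n_k×n_k real symmetric positive semidefinite matrix with L_k·1_{n_k} = 0. Let p ≥ 0. Let X ∈ ℝ^{n×(K−1)} satisfy Xᵀ X = I_{K−1}, write X = [X_1ᵀ, …, X_Kᵀ]ᵀ with blocks X_k ∈ ℝ^{n_k×(K−1)}, and assume X_kᵀ 1_{n_k} = 0 for every k. Then Σ_{k=1}^{K} trace(X_kᵀ L_k X_k) + p·Σ_{k=1}^{K} (n − n_k)·trace(X_kᵀ X_k) ≥ (K−1)·( min_{k} λ_2(L_k) + p·(n − max_{k} n_k) ), where λ_2(L_k) denotes the second-smallest eigenvalue of L_k. -/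

import Mathlib

/-!
Expand each column `x` of a block `Xₖ` in the orthonormal eigenbasis `Uₖ` of `Lₖ`:
`x ⬝ Lₖ x = ∑ μᵢ cᵢ²` and `x ⬝ x = ∑ cᵢ²` with `c = Uₖᵀ x`. Because `x ⊥ 1` and `1 ∈ ker Lₖ`,
either `μ₀ = μ₁` or `c₀ = 0`, so `x ⬝ Lₖ x ≥ λ₂(Lₖ) ‖x‖²`. Summing over columns gives
`trace(Xₖᵀ Lₖ Xₖ) ≥ λ₂(Lₖ) tₖ` with `tₖ = trace(Xₖᵀ Xₖ) ≥ 0`, while `∑ tₖ = trace(Xᵀ X) = K - 1`;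
bounding `λ₂(Lₖ) ≥ minₖ λ₂` and `n - nₖ ≥ n - maxₖ nₖ` termwise finishes the proof.
-/

open Matrix BigOperators

/-- The `k`-th row block of a matrix whose rows are indexed by the sigma type
`(k : Fin K) × Fin (nk k)`. -/
def blockOf {K d : ℕ} {nk : Fin K → ℕ}
    (X : Matrix ((k : Fin K) × Fin (nk k)) (Fin d) ℝ) (k : Fin K) :
    Matrix (Fin (nk k)) (Fin d) ℝ :=
  Matrix.of fun i j => X ⟨k, i⟩ j

section Eigenbasis

variable {n : Type*} [Fintype n] [DecidableEq n]

lemma dotProduct_mulVec_conj_diagonal {R : Type*} [CommRing R] (U : Matrix n n R) (μ : n → R)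
    (v : n → R) : v ⬝ᵥ (U * diagonal μ * Uᵀ) *ᵥ v = ∑ i, μ i * (Uᵀ *ᵥ v) i ^ 2 := by
  rw [← mulVec_mulVec, ← mulVec_mulVec, dotProduct_mulVec, ← mulVec_transpose]
  simp only [dotProduct, mulVec_diagonal]
  exact Finset.sum_congr rfl fun i _ => by ring

lemma sum_transpose_mulVec_sq {R : Type*} [CommRing R] {U : Matrix n n R} (hU : Uᵀ * U = 1)
    (v : n → R) : ∑ i, (Uᵀ *ᵥ v) i ^ 2 = v ⬝ᵥ v := by
  have hUU : U * Uᵀ = 1 := mul_eq_one_comm.mp hU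
  simpa [sq, dotProduct, mulVec_transpose, hUU] using
    dotProduct_mulVec (Uᵀ *ᵥ v) Uᵀ v

variable {L U : Matrix n n ℝ} {μ : n → ℝ}

lemma mul_transpose_mulVec_apply_eq_zero (hU : Uᵀ * U = 1)
    (hdec : L = U * diagonal μ * Uᵀ) {w : n → ℝ} (hw : L *ᵥ w = 0) (i : n) :
    μ i * (Uᵀ *ᵥ w) i = 0 := by
  have hUL : Uᵀ * L = diagonal μ * Uᵀ := by
    rw [hdec, ← Matrix.mul_assoc, ← Matrix.mul_assoc, hU, Matrix.one_mul]
  have hUw := congrFun (congrArg (· *ᵥ w) hUL) i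
  simpa [← mulVec_mulVec, hw, mulVec_diagonal] using hUw.symm

lemma eigenvalue_nonneg_of_posSemidef (hL : L.PosSemidef) (hU : Uᵀ * U = 1)
    (hdec : L = U * diagonal μ * Uᵀ) (i : n) : 0 ≤ μ i := by
  have h := hL.dotProduct_mulVec_nonneg (U *ᵥ Pi.single i 1)
  rw [star_trivial, hdec, dotProduct_mulVec_conj_diagonal, mulVec_mulVec, hU,
    one_mulVec] at h
  simpa [Pi.single_apply] using h

end Eigenbasis

section TraceForms

variable {m d R : Type*} [Fintype m] [Fintype d]

lemma trace_transpose_mul_mul [NonUnitalSemiring R] (L : Matrix m m R) (A : Matrix m d R) :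
    (Aᵀ * L * A).trace = ∑ j, Aᵀ j ⬝ᵥ L *ᵥ Aᵀ j := by
  rw [Matrix.mul_assoc]
  rfl

lemma trace_transpose_mul_self [NonUnitalSemiring R] (A : Matrix m d R) :
    (Aᵀ * A).trace = ∑ j, Aᵀ j ⬝ᵥ Aᵀ j :=
  rfl

lemma trace_transpose_mul_self_nonneg (A : Matrix m d ℝ) : 0 ≤ (Aᵀ * A).trace := by
  rw [trace_transpose_mul_self]
  exact Finset.sum_nonneg fun j _ => by simpa using dotProduct_star_self_nonneg (Aᵀ j)

end TraceForms

lemma transpose_mul_self_eq_sum_blockOf {K d : ℕ} {nk : Fin K → ℕ}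
    (X : Matrix ((k : Fin K) × Fin (nk k)) (Fin d) ℝ) :
    Xᵀ * X = ∑ k, (blockOf X k)ᵀ * blockOf X k := by
  ext i j
  simp [mul_apply, Matrix.sum_apply, Fintype.sum_sigma, blockOf]

section SecondEigenvalue

variable {n : ℕ} {L U : Matrix (Fin n) (Fin n) ℝ} {μ : Fin n → ℝ} {w : Fin n → ℝ}

/- If `μ₀ < μ₁`, then all `μᵢ` with `i ≠ 0` are positive, so the kernel vector `w` lies on the
first eigenvector `U 0`; orthogonality to `w` then kills the first coordinate of `v`. -/
lemma transpose_mulVec_apply_zero_eq_zero (hn : 1 < n) (hL : L.PosSemidef) (hμ : Monotone μ)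
    (hU : Uᵀ * U = 1) (hdec : L = U * diagonal μ * Uᵀ) (hw : L *ᵥ w = 0) (hw₀ : w ≠ 0)
    {v : Fin n → ℝ} (hv : v ⬝ᵥ w = 0) (hlt : μ ⟨0, by omega⟩ < μ ⟨1, hn⟩) :
    (Uᵀ *ᵥ v) ⟨0, by omega⟩ = 0 := by
  set i₀ : Fin n := ⟨0, by omega⟩
  set d := Uᵀ *ᵥ w
  have hd : ∀ i ≠ i₀, d i = 0 := by
    intro i hi
    have h1i : (⟨1, hn⟩ : Fin n) ≤ i :=
      Fin.le_def.mpr (Nat.one_le_iff_ne_zero.mpr fun h => hi (Fin.ext h))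
    have hpos : 0 < μ i :=
      (eigenvalue_nonneg_of_posSemidef hL hU hdec i₀).trans_lt (hlt.trans_le (hμ h1i))
    exact (mul_eq_zero.mp (mul_transpose_mulVec_apply_eq_zero hU hdec hw i)).resolve_left hpos.ne'
  have hUd : U *ᵥ d = w := by rw [mulVec_mulVec, mul_eq_one_comm.mp hU, one_mulVec]
  have hd₀ : d i₀ ≠ 0 := by
    intro h
    refine hw₀ (hUd ▸ ?_)
    rw [show d = 0 from funext fun i => if hi : i = i₀ then hi ▸ h else hd i hi, mulVec_zero]
  have hcd : (Uᵀ *ᵥ v) i₀ * d i₀ = 0 :=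
    calc (Uᵀ *ᵥ v) i₀ * d i₀ = (Uᵀ *ᵥ v) ⬝ᵥ d :=
          (Fintype.sum_eq_single (f := fun i => (Uᵀ *ᵥ v) i * d i) i₀ fun i hi => by
            simp [hd i hi]).symm
      _ = v ⬝ᵥ U *ᵥ d := by rw [dotProduct_mulVec v U d, mulVec_transpose]
      _ = v ⬝ᵥ w := by rw [hUd]
      _ = 0 := hv
  exact (mul_eq_zero.mp hcd).resolve_right hd₀

lemma eigenvalue_one_mul_dotProduct_self_le (hn : 1 < n) (hL : L.PosSemidef) (hμ : Monotone μ)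
    (hU : Uᵀ * U = 1) (hdec : L = U * diagonal μ * Uᵀ) (hw : L *ᵥ w = 0) (hw₀ : w ≠ 0)
    {v : Fin n → ℝ} (hv : v ⬝ᵥ w = 0) : μ ⟨1, hn⟩ * (v ⬝ᵥ v) ≤ v ⬝ᵥ L *ᵥ v := by
  rw [← sum_transpose_mulVec_sq hU, Finset.mul_sum, hdec, dotProduct_mulVec_conj_diagonal]
  refine Finset.sum_le_sum fun i _ => ?_
  rcases i with ⟨_ | j, hj⟩
  · rcases le_or_gt (μ ⟨1, hn⟩) (μ ⟨0, by omega⟩) with hle | hlt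
    · gcongr
    · rw [transpose_mulVec_apply_zero_eq_zero hn hL hμ hU hdec hw hw₀ hv hlt]
      simp
  · gcongr
    exact hμ (Fin.le_def.mpr (Nat.le_add_left 1 j))

lemma eigenvalue_one_mul_trace_le {d : Type*} [Fintype d] (hn : 1 < n) (hL : L.PosSemidef)
    (hμ : Monotone μ) (hU : Uᵀ * U = 1) (hdec : L = U * diagonal μ * Uᵀ) (hw : L *ᵥ w = 0)
    (hw₀ : w ≠ 0) {A : Matrix (Fin n) d ℝ} (hA : ∀ j, Aᵀ j ⬝ᵥ w = 0) :
    μ ⟨1, hn⟩ * (Aᵀ * A).trace ≤ (Aᵀ * L * A).trace := by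
  rw [trace_transpose_mul_self, trace_transpose_mul_mul, Finset.mul_sum]
  exact Finset.sum_le_sum fun j _ =>
    eigenvalue_one_mul_dotProduct_self_le hn hL hμ hU hdec hw hw₀ (hA j)

end SecondEigenvalue

/-- Deterministic lower bound (Case 2 of Theorem 2): for cluster Laplacians `Lₖ`
(symmetric PSD, `Lₖ 1 = 0`, with monotone eigenvalue listing `μ k` via an orthogonal
diagonalization) and `X ∈ ℝ^{n×(K-1)}` with orthonormal columns and centered blocks,
`∑ₖ trace(Xₖᵀ Lₖ Xₖ) + p·∑ₖ (n - nₖ)·trace(Xₖᵀ Xₖ)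
  ≥ (K-1)·(minₖ λ₂(Lₖ) + p·(n - maxₖ nₖ))`. -/
theorem stmt8 (K : ℕ) (hK : 2 ≤ K) (nk : Fin K → ℕ) (hnk : ∀ k, 2 ≤ nk k)
    (L : (k : Fin K) → Matrix (Fin (nk k)) (Fin (nk k)) ℝ)
    (hPSD : ∀ k, (L k).PosSemidef)
    (hL1 : ∀ k, (L k).mulVec (fun _ => (1 : ℝ)) = 0)
    (μ : (k : Fin K) → Fin (nk k) → ℝ) (hμ : ∀ k, Monotone (μ k))
    (U : (k : Fin K) → Matrix (Fin (nk k)) (Fin (nk k)) ℝ)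
    (hU : ∀ k, (U k)ᵀ * U k = 1)
    (hdec : ∀ k, L k = U k * Matrix.diagonal (μ k) * (U k)ᵀ)
    (p : ℝ) (hp : 0 ≤ p)
    (X : Matrix ((k : Fin K) × Fin (nk k)) (Fin (K - 1)) ℝ)
    (hX : Xᵀ * X = 1)
    (hXcenter : ∀ k j, ∑ i : Fin (nk k), X ⟨k, i⟩ j = 0) :
    ((K : ℝ) - 1) *
        ((Finset.univ.inf'
            (Finset.univ_nonempty_iff.mpr (Fin.pos_iff_nonempty.mp (by omega)))
            (fun k => μ k ⟨1, by have := hnk k; omega⟩))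
          + p * (((∑ l : Fin K, nk l : ℕ) : ℝ) -
              (Finset.univ.sup'
                (Finset.univ_nonempty_iff.mpr (Fin.pos_iff_nonempty.mp (by omega)))
                nk : ℕ)))
      ≤ ∑ k : Fin K, ((blockOf X k)ᵀ * L k * blockOf X k).trace
        + p * ∑ k : Fin K, (((∑ l : Fin K, nk l : ℕ) : ℝ) - (nk k : ℕ))
            * ((blockOf X k)ᵀ * blockOf X k).trace := by
  have hne : (Finset.univ : Finset (Fin K)).Nonempty := Finset.univ_nonempty_iff.mpr ⟨⟨0, by omega⟩⟩
  set m := Finset.univ.inf' hne (fun k => μ k ⟨1, hnk k⟩)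
  set M := Finset.univ.sup' hne nk
  set N : ℝ := ((∑ l : Fin K, nk l : ℕ) : ℝ)
  set t : Fin K → ℝ := fun k => ((blockOf X k)ᵀ * blockOf X k).trace
  have ht_sum : ∑ k, t k = (K : ℝ) - 1 := by
    rw [← trace_sum, ← transpose_mul_self_eq_sum_blockOf, hX, trace_one, Fintype.card_fin,
      Nat.cast_sub (by omega), Nat.cast_one]
  have hspec : ∀ k, μ k ⟨1, hnk k⟩ * t k ≤ ((blockOf X k)ᵀ * L k * blockOf X k).trace :=
    fun k => eigenvalue_one_mul_trace_le (hnk k) (hPSD k) (hμ k) (hU k) (hdec k) (hL1 k)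
      (Function.ne_iff.mpr ⟨⟨0, by have := hnk k; omega⟩, one_ne_zero⟩)
      fun j => by simpa [dotProduct, blockOf] using hXcenter k j
  rw [← ht_sum, Finset.sum_mul, Finset.mul_sum, ← Finset.sum_add_distrib]
  refine Finset.sum_le_sum fun k _ => ?_
  have hm : m ≤ μ k ⟨1, hnk k⟩ := Finset.inf'_le _ (Finset.mem_univ k)
  have hM : (nk k : ℝ) ≤ M := Nat.cast_le.mpr (Finset.le_sup' nk (Finset.mem_univ k))
  have ht : 0 ≤ t k := trace_transpose_mul_self_nonneg _
  calc t k * (m + p * (N - M)) = m * t k + p * ((N - M) * t k) := by ring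
    _ ≤ μ k ⟨1, hnk k⟩ * t k + p * ((N - nk k) * t k) := by gcongr
    _ ≤ _ := by gcongr; exact hspec k
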